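/- arXiv:0803.3908 — 2 statements merged into one kernel-verified Lean document; each statement's English description precedes it below -/
import Mathlib

section
/- Let Y be a 2×N complex matrix with Plücker coordinates Y_{km}, let u ∈ (ℂ*)^N, and suppose the point [u] lies on the line L_Y. Then for every cycle (k_1, ..., k_r) of distinct elements of {1,...,N} (with k_{r+1} = k_1), one has Σ_{i=1}^{r} Y_{k_i k_{i+1}} u_{k_i}^{-1} u_{k_{i+1}}^{-1} = 0. -/
/-- If `[u]` lies on the line `L_Y` then for every cycle `(k_1,…,k_r)` of distinct indices
(here of length `r + 1`, with indices taken cyclically so that `k_{r+1} = k_1`)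
the cyclic sum `∑ Y_{k_i k_{i+1}} u_{k_i}⁻¹ u_{k_{i+1}}⁻¹` vanishes. -/
theorem cycle_sum_vanishes (N : ℕ) (y : Fin 2 → Fin N → ℂ)
    (Yp : Fin N → Fin N → ℂ)
    (hYp : ∀ k m, Yp k m = y 0 k * y 1 m - y 1 k * y 0 m)
    (u : Fin N → ℂ) (hu : ∀ i, u i ≠ 0)
    (t₁ t₂ lam : ℂ) (hlam : lam ≠ 0)
    (hline : ∀ j, lam * u j = t₁ * y 0 j + t₂ * y 1 j)
    (r : ℕ) (k : Fin (r + 1) → Fin N) (hk : Function.Injective k) :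
    ∑ i : Fin (r + 1), Yp (k i) (k (i + 1)) * (u (k i))⁻¹ * (u (k (i + 1)))⁻¹ = 0 := by
  set g : Fin (r + 1) → ℂ := fun i => y 0 (k i) / u (k i) with hg
  set h : Fin (r + 1) → ℂ := fun i => y 1 (k i) / u (k i) with hh
  have hterm : ∀ i : Fin (r + 1), Yp (k i) (k (i + 1)) * (u (k i))⁻¹ * (u (k (i + 1)))⁻¹
      = g i * h (i + 1) - h i * g (i + 1) := by
    intro i
    have h1 := hu (k i); have h2 := hu (k (i + 1))
    simp only [hg, hh, hYp]
    field_simp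

  have hrel : ∀ i : Fin (r + 1), t₁ * g i + t₂ * h i = lam := by
    intro i
    have h1 := hu (k i)
    have h2 := hline (k i)
    have e : t₁ * g i + t₂ * h i = (t₁ * y 0 (k i) + t₂ * y 1 (k i)) / u (k i) := by
      simp only [hg, hh]; ring
    rw [e, ← h2, mul_div_assoc, div_self h1, mul_one]
  have hshiftg : ∑ i : Fin (r + 1), g (i + 1) = ∑ i : Fin (r + 1), g i :=
    Fintype.sum_equiv (Equiv.addRight 1) _ _ (fun i => rfl)
  have hshifth : ∑ i : Fin (r + 1), h (i + 1) = ∑ i : Fin (r + 1), h i :=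
    Fintype.sum_equiv (Equiv.addRight 1) _ _ (fun i => rfl)
  have hne : t₁ ≠ 0 ∨ t₂ ≠ 0 := by
    by_contra hcon
    push_neg at hcon
    have h0 := hline (k 0)
    rw [hcon.1, hcon.2] at h0
    simp at h0
    exact (mul_ne_zero hlam (hu (k 0))) (by simpa using h0)
  rw [Finset.sum_congr rfl (fun i _ => hterm i)]
  rcases hne with ht | ht
  · have key : t₁ * ∑ i : Fin (r + 1), (g i * h (i + 1) - h i * g (i + 1)) = 0 := by
      rw [Finset.mul_sum]
      have step : ∀ i : Fin (r + 1),
          t₁ * (g i * h (i + 1) - h i * g (i + 1)) = lam * h (i + 1) - lam * h i := by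
        intro i
        have e1 := hrel i
        have e2 := hrel (i + 1)
        linear_combination h (i + 1) * e1 - h i * e2
      rw [Finset.sum_congr rfl (fun i _ => step i), Finset.sum_sub_distrib,
        ← Finset.mul_sum, ← Finset.mul_sum, hshifth, sub_self]
    exact (mul_eq_zero.mp key).resolve_left ht
  · have key : t₂ * ∑ i : Fin (r + 1), (g i * h (i + 1) - h i * g (i + 1)) = 0 := by
      rw [Finset.mul_sum]
      have step : ∀ i : Fin (r + 1),
          t₂ * (g i * h (i + 1) - h i * g (i + 1)) = lam * g i - lam * g (i + 1) := by
        intro i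
        have e1 := hrel i
        have e2 := hrel (i + 1)
        linear_combination g i * e2 - g (i + 1) * e1
      rw [Finset.sum_congr rfl (fun i _ => step i), Finset.sum_sub_distrib,
        ← Finset.mul_sum, ← Finset.mul_sum, hshiftg, sub_self]
    exact (mul_eq_zero.mp key).resolve_left ht
end

section
/- Let B be a 2×N integer matrix with columns β_1, ..., β_N ∈ ℤ^2 such that β_1 + ... + β_N = 0 and no β_i = 0. For c ∈ ℝ^2 not lying on any ray ℝ_{≥0} β_i, let L_c = { {i,j} ⊆ {1,...,N} : c ∈ ℝ_{≥0}β_i + ℝ_{≥0}β_j }. Then the element a_0 := Σ_{{i,j} ∈ L_c} |det(β_i, β_j)| (a_i + a_j) ∈ ℤ^N/L is independent of the choice of c, where L ≤ ℤ^N is the row span of B and a_i = e_i mod L. -/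
open scoped Classical

/-- The element `a_0(c) = ∑_{{i,j} ∈ L_c} |det(β_i,β_j)| (a_i + a_j)` of `ℤ^N/L`,
summed over pairs `i < j` whose cone `ℝ_{≥0}β_i + ℝ_{≥0}β_j` contains `c`. -/
noncomputable def a0sum (N : ℕ) (B : Matrix (Fin 2) (Fin N) ℤ)
    (L : AddSubgroup (Fin N → ℤ)) (c : Fin 2 → ℝ) : (Fin N → ℤ) ⧸ L :=
  ∑ p ∈ Finset.univ.filter (fun p : Fin N × Fin N => p.1 < p.2 ∧
      ∃ s t : ℝ, 0 ≤ s ∧ 0 ≤ t ∧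
        ∀ r, c r = s * (B r p.1 : ℝ) + t * (B r p.2 : ℝ)),
    (B 0 p.1 * B 1 p.2 - B 1 p.1 * B 0 p.2).natAbs •
      ((QuotientAddGroup.mk (Pi.single p.1 1) : (Fin N → ℤ) ⧸ L) +
        QuotientAddGroup.mk (Pi.single p.2 1))

namespace A0Aux

private lemma tri3 (x : ℝ) :
    (x < 0 ∧ ¬ 0 < x ∧ x ≠ 0) ∨ (¬ x < 0 ∧ ¬ 0 < x ∧ x = 0) ∨ (¬ x < 0 ∧ 0 < x ∧ x ≠ 0) := by
  rcases lt_trichotomy x 0 with h|h|h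
  · exact Or.inl ⟨h, by linarith, ne_of_lt h⟩
  · exact Or.inr (Or.inl ⟨by linarith, by linarith, h⟩)
  · exact Or.inr (Or.inr ⟨by linarith, h, ne_of_gt h⟩)

set_option maxHeartbeats 4000000 in
private lemma star (p di di' dj dj' D : ℝ) (hp : 0 < p)
    (hPl : p * D = di' * dj - dj' * di)
    (hi0 : di = 0 → di' < 0) (hi0' : di' = 0 → 0 < di)
    (hj0 : dj = 0 → dj' < 0) (hj0' : dj' = 0 → 0 < dj) :
    ((if di < 0 ∧ 0 < dj ∧ 0 < D then D else if 0 < di ∧ dj < 0 ∧ D < 0 then -D else 0)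
      - (if di' < 0 ∧ 0 < dj' ∧ 0 < D then D else if 0 < di' ∧ dj' < 0 ∧ D < 0 then -D else 0))
    = (if 0 < di' ∧ di < 0 then D else 0) - (if 0 < dj' ∧ dj < 0 then D else 0) := by
  rcases tri3 di with ⟨a1,a2,a3⟩|⟨a1,a2,a3⟩|⟨a1,a2,a3⟩ <;>
  rcases tri3 di' with ⟨b1,b2,b3⟩|⟨b1,b2,b3⟩|⟨b1,b2,b3⟩ <;>
  rcases tri3 dj with ⟨c1,c2,c3⟩|⟨c1,c2,c3⟩|⟨c1,c2,c3⟩ <;>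
  rcases tri3 dj' with ⟨d1,d2,d3⟩|⟨d1,d2,d3⟩|⟨d1,d2,d3⟩ <;>
  first
    | exact absurd (hi0 a3) (by linarith)
    | exact absurd (hi0' b3) (by linarith)
    | exact absurd (hj0 c3) (by linarith)
    | exact absurd (hj0' d3) (by linarith)
    | (rcases tri3 D with ⟨e1,e2,e3⟩|⟨e1,e2,e3⟩|⟨e1,e2,e3⟩ <;>
       simp only [a1,a2,b1,b2,c1,c2,d1,d2,e1,e2,true_and,false_and,and_true,and_false,
         if_true,if_false,iff_true,iff_false,eq_self_iff_true,not_false_iff,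
         if_pos,if_neg,not_true,not_false_eq_true] <;>
       first
         | ring1
         | linarith
         | (exfalso; nlinarith [hPl, hp]))

variable {N : ℕ}

/-- integer determinant of columns i, j -/
private def Dt (B : Matrix (Fin 2) (Fin N) ℤ) (i j : Fin N) : ℤ :=
  B 0 i * B 1 j - B 1 i * B 0 j

/-- det(c, β_i) -/
private def dd (B : Matrix (Fin 2) (Fin N) ℤ) (c : Fin 2 → ℝ) (i : Fin N) : ℝ :=
  c 0 * (B 1 i : ℝ) - c 1 * (B 0 i : ℝ)

private noncomputable def Fc (B : Matrix (Fin 2) (Fin N) ℤ) (c : Fin 2 → ℝ) (i j : Fin N) : ℤ :=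
  if dd B c i < 0 ∧ 0 < dd B c j ∧ 0 < ((Dt B i j : ℤ) : ℝ) then Dt B i j
  else if 0 < dd B c i ∧ dd B c j < 0 ∧ ((Dt B i j : ℤ) : ℝ) < 0 then -Dt B i j else 0

private lemma Dt_skew (B : Matrix (Fin 2) (Fin N) ℤ) (i j : Fin N) :
    Dt B j i = -Dt B i j := by simp [Dt]; ring

private lemma mem_of_Q (B : Matrix (Fin 2) (Fin N) ℤ) (c : Fin 2 → ℝ) (i j : Fin N)
    (h : (dd B c i < 0 ∧ 0 < dd B c j ∧ 0 < ((Dt B i j : ℤ) : ℝ)) ∨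
         (0 < dd B c i ∧ dd B c j < 0 ∧ ((Dt B i j : ℤ) : ℝ) < 0)) :
    ∃ s t : ℝ, 0 ≤ s ∧ 0 ≤ t ∧ ∀ r, c r = s * (B r i : ℝ) + t * (B r j : ℝ) := by
  set D : ℝ := ((Dt B i j : ℤ) : ℝ) with hDdef
  have hD : D ≠ 0 := by rcases h with ⟨_,_,h3⟩|⟨_,_,h3⟩ <;> [exact ne_of_gt h3; exact ne_of_lt h3]
  refine ⟨dd B c j / D, -(dd B c i) / D, ?_, ?_, ?_⟩
  · rcases h with ⟨_,h2,h3⟩|⟨_,h2,h3⟩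
    · exact le_of_lt (div_pos h2 h3)
    · exact le_of_lt (div_pos_of_neg_of_neg h2 h3)
  · rcases h with ⟨h1,_,h3⟩|⟨h1,_,h3⟩
    · exact le_of_lt (div_pos (by linarith) h3)
    · exact le_of_lt (div_pos_of_neg_of_neg (by linarith) h3)
  · intro r
    have key : ∀ rr : Fin 2, c rr * D = dd B c j * (B rr i : ℝ) + -(dd B c i) * (B rr j : ℝ) := by
      intro rr
      fin_cases rr <;>
        · simp only [dd, hDdef, Dt]
          push_cast
          ring
    have := key r
    field_simp
    linarith [this]

private lemma Q_of_mem (B : Matrix (Fin 2) (Fin N) ℤ) (c : Fin 2 → ℝ) (i j : Fin N)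
    (hci : ¬ ∃ s : ℝ, 0 ≤ s ∧ ∀ r, c r = s * (B r i : ℝ))
    (hcj : ¬ ∃ s : ℝ, 0 ≤ s ∧ ∀ r, c r = s * (B r j : ℝ))
    (hmem : ∃ s t : ℝ, 0 ≤ s ∧ 0 ≤ t ∧ ∀ r, c r = s * (B r i : ℝ) + t * (B r j : ℝ))
    (hD : Dt B i j ≠ 0) :
    (dd B c i < 0 ∧ 0 < dd B c j ∧ 0 < ((Dt B i j : ℤ) : ℝ)) ∨
      (0 < dd B c i ∧ dd B c j < 0 ∧ ((Dt B i j : ℤ) : ℝ) < 0) := by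
  obtain ⟨s, t, hs, ht, h⟩ := hmem
  have e0 := h 0
  have e1 := h 1
  have hdj : dd B c j = s * ((Dt B i j : ℤ) : ℝ) := by
    simp only [dd, Dt, e0, e1]; push_cast; ring
  have hdi : dd B c i = -(t * ((Dt B i j : ℤ) : ℝ)) := by
    simp only [dd, Dt, e0, e1]; push_cast; ring
  have hs0 : s ≠ 0 := by
    rintro rfl
    exact hcj ⟨t, ht, fun r => by rw [h r]; ring⟩
  have ht0 : t ≠ 0 := by
    rintro rfl
    exact hci ⟨s, hs, fun r => by rw [h r]; ring⟩
  have hs' : 0 < s := lt_of_le_of_ne hs (Ne.symm hs0)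
  have ht' : 0 < t := lt_of_le_of_ne ht (Ne.symm ht0)
  rcases lt_trichotomy (Dt B i j) 0 with hlt|heq|hgt
  · have : ((Dt B i j : ℤ) : ℝ) < 0 := by exact_mod_cast hlt
    right
    refine ⟨?_, ?_, this⟩
    · rw [hdi]; nlinarith
    · rw [hdj]; nlinarith
  · exact absurd heq hD
  · have : 0 < ((Dt B i j : ℤ) : ℝ) := by exact_mod_cast hgt
    left
    refine ⟨?_, ?_, this⟩
    · rw [hdi]; nlinarith
    · rw [hdj]; nlinarith

private lemma Fc_diag (B : Matrix (Fin 2) (Fin N) ℤ) (c : Fin 2 → ℝ) (i : Fin N) :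
    Fc B c i i = 0 := by
  have h0 : Dt B i i = 0 := by simp [Dt]; ring
  simp [Fc, h0]

private lemma a0sum_eq (B : Matrix (Fin 2) (Fin N) ℤ) (L : AddSubgroup (Fin N → ℤ))
    (c : Fin 2 → ℝ)
    (hc : ∀ j : Fin N, ¬ ∃ s : ℝ, 0 ≤ s ∧ ∀ r, c r = s * (B r j : ℝ)) :
    a0sum N B L c = ∑ i, ∑ j, Fc B c i j •
      (QuotientAddGroup.mk (Pi.single i 1) : (Fin N → ℤ) ⧸ L) := by
  classical
  set A : Fin N → (Fin N → ℤ) ⧸ L := fun i => QuotientAddGroup.mk (Pi.single i 1) with hA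
  have hpoint : ∀ p : Fin N × Fin N,
      (if (p.1 < p.2 ∧ ∃ s t : ℝ, 0 ≤ s ∧ 0 ≤ t ∧
          ∀ r, c r = s * (B r p.1 : ℝ) + t * (B r p.2 : ℝ)) then
        (B 0 p.1 * B 1 p.2 - B 1 p.1 * B 0 p.2).natAbs • (A p.1 + A p.2) else 0)
      = if p.1 < p.2 then Fc B c p.1 p.2 • A p.1 + Fc B c p.2 p.1 • A p.2 else 0 := by
    rintro ⟨i, j⟩
    by_cases hlt : i < j
    · simp only [hlt, true_and, if_true]
      have hDt : B 0 i * B 1 j - B 1 i * B 0 j = Dt B i j := rfl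
      by_cases hmem : ∃ s t : ℝ, 0 ≤ s ∧ 0 ≤ t ∧
          ∀ r, c r = s * (B r i : ℝ) + t * (B r j : ℝ)
      · rw [if_pos hmem]
        by_cases hD0 : Dt B i j = 0
        · have hD0' : Dt B j i = 0 := by rw [Dt_skew, hD0, neg_zero]
          have hn : (B 0 i * B 1 j - B 1 i * B 0 j).natAbs = 0 := by rw [hDt, hD0]; rfl
          have hf1 : Fc B c i j = 0 := by simp [Fc, hD0]
          have hf2 : Fc B c j i = 0 := by simp [Fc, hD0']
          rw [hn, hf1, hf2, zero_zsmul, zero_zsmul, add_zero]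
          exact zero_nsmul _
        · rcases Q_of_mem B c i j (hc i) (hc j) hmem hD0 with ⟨h1, h2, h3⟩ | ⟨h1, h2, h3⟩
          · have hpos : 0 < Dt B i j := by exact_mod_cast h3
            have hFij : Fc B c i j = Dt B i j := if_pos ⟨h1, h2, h3⟩
            have hFji : Fc B c j i = Dt B i j := by
              rw [Fc, if_neg (by rintro ⟨hh, _, _⟩; linarith), if_pos
                ⟨h2, h1, by rw [Dt_skew]; push_cast; linarith⟩, Dt_skew, neg_neg]
            rw [hFij, hFji, hDt, ← natCast_zsmul, Int.natAbs_of_nonneg (le_of_lt hpos),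
              zsmul_add]
          · have hneg : Dt B i j < 0 := by exact_mod_cast h3
            have hFij : Fc B c i j = -Dt B i j := by
              rw [Fc, if_neg (by rintro ⟨hh, _, _⟩; linarith), if_pos ⟨h1, h2, h3⟩]
            have hFji : Fc B c j i = -Dt B i j := by
              rw [Fc, if_pos ⟨h2, h1, by rw [Dt_skew]; push_cast; linarith⟩, Dt_skew]
            rw [hFij, hFji, hDt, ← natCast_zsmul,
              Int.ofNat_natAbs_of_nonpos (le_of_lt hneg), zsmul_add]
      · rw [if_neg hmem]
        have hFij : Fc B c i j = 0 := by
          rw [Fc, if_neg, if_neg]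
          · intro hq
            exact hmem (mem_of_Q B c i j (Or.inr hq))
          · intro hq
            exact hmem (mem_of_Q B c i j (Or.inl hq))
        have hFji : Fc B c j i = 0 := by
          rw [Fc, if_neg, if_neg]
          · intro hq
            obtain ⟨s, t, hs, ht, hh⟩ := mem_of_Q B c j i (Or.inr hq)
            exact hmem ⟨t, s, ht, hs, fun r => by rw [hh r]; ring⟩
          · intro hq
            obtain ⟨s, t, hs, ht, hh⟩ := mem_of_Q B c j i (Or.inl hq)
            exact hmem ⟨t, s, ht, hs, fun r => by rw [hh r]; ring⟩
        rw [hFij, hFji, zero_zsmul, zero_zsmul, add_zero]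
    · simp [hlt]
  unfold a0sum
  rw [Finset.sum_filter, Finset.sum_congr rfl (fun p _ => hpoint p), ← Finset.sum_filter]
  rw [Finset.sum_add_distrib]
  have hswap : (∑ p ∈ Finset.univ.filter (fun p : Fin N × Fin N => p.1 < p.2),
        Fc B c p.2 p.1 • A p.2)
      = ∑ p ∈ Finset.univ.filter (fun p : Fin N × Fin N => p.2 < p.1),
        Fc B c p.1 p.2 • A p.1 := by
    refine Finset.sum_equiv (Equiv.prodComm (Fin N) (Fin N)) ?_ ?_
    · intro p; simp
    · intro p hp; rfl
  rw [hswap]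
  have hdisj : Disjoint (Finset.univ.filter (fun p : Fin N × Fin N => p.1 < p.2))
      (Finset.univ.filter (fun p : Fin N × Fin N => p.2 < p.1)) := by
    simp only [Finset.disjoint_left, Finset.mem_filter]
    rintro p ⟨_, h1⟩ ⟨_, h2⟩
    exact absurd h2 (lt_asymm h1)
  rw [← Finset.sum_union hdisj]
  have hun : (Finset.univ.filter (fun p : Fin N × Fin N => p.1 < p.2)) ∪
      (Finset.univ.filter (fun p : Fin N × Fin N => p.2 < p.1))
      = Finset.univ.filter (fun p : Fin N × Fin N => p.1 ≠ p.2) := by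
    ext p
    simp only [Finset.mem_union, Finset.mem_filter, Finset.mem_univ, true_and]
    constructor
    · rintro (h | h)
      · exact ne_of_lt h
      · exact ne_of_gt h
    · intro h
      exact lt_or_gt_of_ne h
  rw [hun]
  rw [Finset.sum_filter_of_ne (fun p _ h => by
    intro heq
    apply h
    rw [show p.2 = p.1 from heq.symm, Fc_diag, zero_zsmul])]
  exact Fintype.sum_prod_type (f := fun p : Fin N × Fin N => Fc B c p.1 p.2 • A p.1)

private lemma parallel_neg (c : Fin 2 → ℝ) (x y : ℝ) (hb : ¬(x = 0 ∧ y = 0))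
    (h0 : c 0 * y - c 1 * x = 0)
    (hc : ¬ ∃ s : ℝ, 0 ≤ s ∧ (c 0 = s * x ∧ c 1 = s * y)) :
    ∃ lam : ℝ, lam < 0 ∧ c 0 = lam * x ∧ c 1 = lam * y := by
  by_cases hx : x = 0
  · have hy : y ≠ 0 := fun h => hb ⟨hx, h⟩
    have hc0 : c 0 = 0 := by
      have h' : c 0 * y = 0 := by rw [hx] at h0; linarith
      rcases mul_eq_zero.mp h' with h | h
      · exact h
      · exact absurd h hy
    refine ⟨c 1 / y, ?_, by rw [hx, mul_zero]; exact hc0, by field_simp⟩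
    by_contra hge
    push_neg at hge
    exact hc ⟨c 1 / y, hge, by rw [hx, mul_zero]; exact hc0, by field_simp⟩
  · have h1 : c 1 = c 0 / x * y := by field_simp; linear_combination -h0
    refine ⟨c 0 / x, ?_, by field_simp, h1⟩
    by_contra hge
    push_neg at hge
    exact hc ⟨c 0 / x, hge, by field_simp, h1⟩

private lemma hnzR {B : Matrix (Fin 2) (Fin N) ℤ} (hnz : ∀ j : Fin N, ¬(B 0 j = 0 ∧ B 1 j = 0))
    (j : Fin N) : ¬(((B 0 j : ℤ) : ℝ) = 0 ∧ ((B 1 j : ℤ) : ℝ) = 0) := by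
  rintro ⟨h0, h1⟩
  exact hnz j ⟨by exact_mod_cast h0, by exact_mod_cast h1⟩

private lemma hc_pair {B : Matrix (Fin 2) (Fin N) ℤ} {c : Fin 2 → ℝ}
    (hc : ∀ j : Fin N, ¬ ∃ s : ℝ, 0 ≤ s ∧ ∀ r, c r = s * (B r j : ℝ)) (j : Fin N) :
    ¬ ∃ s : ℝ, 0 ≤ s ∧ (c 0 = s * ((B 0 j : ℤ) : ℝ) ∧ c 1 = s * ((B 1 j : ℤ) : ℝ)) := by
  rintro ⟨s, hs, h0, h1⟩
  exact hc j ⟨s, hs, fun r => by fin_cases r <;> assumption⟩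

private lemma dd_antipodal {B : Matrix (Fin 2) (Fin N) ℤ} {c c' : Fin 2 → ℝ}
    (hnz : ∀ j : Fin N, ¬(B 0 j = 0 ∧ B 1 j = 0))
    (hc : ∀ j : Fin N, ¬ ∃ s : ℝ, 0 ≤ s ∧ ∀ r, c r = s * (B r j : ℝ))
    (hp : 0 < c' 0 * c 1 - c' 1 * c 0) (i : Fin N)
    (h0 : dd B c i = 0) : dd B c' i < 0 := by
  obtain ⟨lam, hlam, he0, he1⟩ := parallel_neg c _ _ (hnzR hnz i) (by
    simpa [dd] using h0) (hc_pair hc i)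
  have hdet : c' 0 * c 1 - c' 1 * c 0 = lam * dd B c' i := by
    rw [he0, he1, dd]; ring
  nlinarith [hp, hlam, hdet]

private lemma dd_antipodal' {B : Matrix (Fin 2) (Fin N) ℤ} {c c' : Fin 2 → ℝ}
    (hnz : ∀ j : Fin N, ¬(B 0 j = 0 ∧ B 1 j = 0))
    (hc' : ∀ j : Fin N, ¬ ∃ s : ℝ, 0 ≤ s ∧ ∀ r, c' r = s * (B r j : ℝ))
    (hp : 0 < c' 0 * c 1 - c' 1 * c 0) (i : Fin N)
    (h0 : dd B c' i = 0) : 0 < dd B c i := by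
  obtain ⟨lam, hlam, he0, he1⟩ := parallel_neg c' _ _ (hnzR hnz i) (by
    simpa [dd] using h0) (hc_pair hc' i)
  have hdet : c' 0 * c 1 - c' 1 * c 0 = -(lam * dd B c i) := by
    rw [he0, he1, dd]; ring
  nlinarith [hp, hlam, hdet]

private lemma key (B : Matrix (Fin 2) (Fin N) ℤ)
    (hsum : ∀ r : Fin 2, ∑ j, B r j = 0)
    (hnz : ∀ j : Fin N, ¬(B 0 j = 0 ∧ B 1 j = 0))
    (L : AddSubgroup (Fin N → ℤ))
    (hL : L = AddSubgroup.closure {fun j => B 0 j, fun j => B 1 j})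
    (c c' : Fin 2 → ℝ)
    (hc : ∀ j : Fin N, ¬ ∃ s : ℝ, 0 ≤ s ∧ ∀ r, c r = s * (B r j : ℝ))
    (hc' : ∀ j : Fin N, ¬ ∃ s : ℝ, 0 ≤ s ∧ ∀ r, c' r = s * (B r j : ℝ))
    (hp : 0 < c' 0 * c 1 - c' 1 * c 0) :
    a0sum N B L c = a0sum N B L c' := by
  classical
  set A : Fin N → (Fin N → ℤ) ⧸ L := fun i => QuotientAddGroup.mk (Pi.single i 1) with hA
  rw [a0sum_eq B L c hc, a0sum_eq B L c' hc', ← sub_eq_zero, ← Finset.sum_sub_distrib]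
  have hstar : ∀ i j : Fin N, Fc B c i j - Fc B c' i j =
      (if 0 < dd B c' i ∧ dd B c i < 0 then Dt B i j else 0) -
      (if 0 < dd B c' j ∧ dd B c j < 0 then Dt B i j else 0) := by
    intro i j
    have hPl : (c' 0 * c 1 - c' 1 * c 0) * ((Dt B i j : ℤ) : ℝ)
        = dd B c' i * dd B c j - dd B c' j * dd B c i := by
      simp only [dd, Dt]; push_cast; ring
    have hst := star (c' 0 * c 1 - c' 1 * c 0) (dd B c i) (dd B c' i) (dd B c j)
      (dd B c' j) ((Dt B i j : ℤ) : ℝ) hp hPl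
      (dd_antipodal hnz hc hp i) (dd_antipodal' hnz hc' hp i)
      (dd_antipodal hnz hc hp j) (dd_antipodal' hnz hc' hp j)
    have h1 : ((Fc B c i j : ℤ) : ℝ) =
        (if dd B c i < 0 ∧ 0 < dd B c j ∧ 0 < ((Dt B i j : ℤ) : ℝ) then ((Dt B i j : ℤ) : ℝ)
          else if 0 < dd B c i ∧ dd B c j < 0 ∧ ((Dt B i j : ℤ) : ℝ) < 0
            then -((Dt B i j : ℤ) : ℝ) else 0) := by
      rw [Fc]; split_ifs <;> push_cast <;> ring
    have h2 : ((Fc B c' i j : ℤ) : ℝ) =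
        (if dd B c' i < 0 ∧ 0 < dd B c' j ∧ 0 < ((Dt B i j : ℤ) : ℝ) then ((Dt B i j : ℤ) : ℝ)
          else if 0 < dd B c' i ∧ dd B c' j < 0 ∧ ((Dt B i j : ℤ) : ℝ) < 0
            then -((Dt B i j : ℤ) : ℝ) else 0) := by
      rw [Fc]; split_ifs <;> push_cast <;> ring
    have h3 : (((if 0 < dd B c' i ∧ dd B c i < 0 then Dt B i j else 0) : ℤ) : ℝ)
        = (if 0 < dd B c' i ∧ dd B c i < 0 then ((Dt B i j : ℤ) : ℝ) else 0) := by
      split_ifs <;> push_cast <;> ring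
    have h4 : (((if 0 < dd B c' j ∧ dd B c j < 0 then Dt B i j else 0) : ℤ) : ℝ)
        = (if 0 < dd B c' j ∧ dd B c j < 0 then ((Dt B i j : ℤ) : ℝ) else 0) := by
      split_ifs <;> push_cast <;> ring
    have : ((Fc B c i j - Fc B c' i j : ℤ) : ℝ) =
        (((if 0 < dd B c' i ∧ dd B c i < 0 then Dt B i j else 0) -
          (if 0 < dd B c' j ∧ dd B c j < 0 then Dt B i j else 0) : ℤ) : ℝ) := by
      rw [Int.cast_sub, Int.cast_sub, h1, h2, h3, h4]
      exact hst
    exact_mod_cast this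
  have hrw : ∀ i : Fin N, (∑ j, Fc B c i j • A i) - (∑ j, Fc B c' i j • A i)
      = (∑ j, (if 0 < dd B c' i ∧ dd B c i < 0 then Dt B i j else 0) • A i)
        - (∑ j, (if 0 < dd B c' j ∧ dd B c j < 0 then Dt B i j else 0) • A i) := by
    intro i
    rw [← Finset.sum_sub_distrib, ← Finset.sum_sub_distrib]
    refine Finset.sum_congr rfl (fun j _ => ?_)
    have hz : ∀ (m n : ℤ) (x : (Fin N → ℤ) ⧸ L), m • x - n • x = (m - n) • x := by
      intro m n x
      rw [sub_zsmul, sub_eq_add_neg]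
    rw [hz, hz, hstar i j]
  rw [Finset.sum_congr rfl (fun i _ => hrw i), Finset.sum_sub_distrib]
  have hrow : ∀ i : Fin N, ∑ j, Dt B i j = 0 := by
    intro i
    simp only [Dt]
    rw [Finset.sum_sub_distrib, ← Finset.mul_sum, ← Finset.mul_sum, hsum 0, hsum 1,
      mul_zero, mul_zero, sub_zero]
  have hfirst : ∀ i : Fin N,
      (∑ j, (if 0 < dd B c' i ∧ dd B c i < 0 then Dt B i j else 0) • A i) = 0 := by
    intro i
    by_cases hPi : 0 < dd B c' i ∧ dd B c i < 0
    · simp only [if_pos hPi]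
      calc (∑ j, Dt B i j • A i) = (∑ j, Dt B i j) • A i := (Finset.sum_smul).symm
        _ = 0 := by rw [hrow i, zero_zsmul]
    · simp only [if_neg hPi, zero_zsmul, Finset.sum_const_zero]
  have hcol : ∀ j : Fin N, (∑ i, Dt B i j • A i) = 0 := by
    intro j
    have hv : (∑ i, Dt B i j • A i)
        = QuotientAddGroup.mk' L (∑ i, Dt B i j • Pi.single i 1) := by
      rw [map_sum]
      rfl
    have hvv : (∑ i, Dt B i j • Pi.single i (1 : ℤ)) = fun i => Dt B i j := by
      funext k
      rw [Finset.sum_apply]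
      simp only [Pi.smul_apply, Pi.single_apply, smul_eq_mul, mul_ite, mul_one, mul_zero]
      rw [Finset.sum_ite_eq Finset.univ k (fun i => Dt B i j)]
      simp
    have hr0 : (fun i => B 0 i) ∈ L := by
      rw [hL]; exact AddSubgroup.subset_closure (Set.mem_insert _ _)
    have hr1 : (fun i => B 1 i) ∈ L := by
      rw [hL]
      exact AddSubgroup.subset_closure (Set.mem_insert_of_mem _ rfl)
    have hvmem : (fun i => Dt B i j) ∈ L := by
      have he : (fun i => Dt B i j) = (B 1 j) • (fun i => B 0 i) - (B 0 j) • (fun i => B 1 i) := by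
        funext k
        simp only [Dt, Pi.sub_apply, Pi.smul_apply, smul_eq_mul]
        ring
      rw [he]
      exact L.sub_mem (L.zsmul_mem hr0 _) (L.zsmul_mem hr1 _)
    rw [hv, hvv]
    exact (QuotientAddGroup.eq_zero_iff _).mpr hvmem
  have hsecond : ∀ j : Fin N,
      (∑ i, (if 0 < dd B c' j ∧ dd B c j < 0 then Dt B i j else 0) • A i) = 0 := by
    intro j
    by_cases hPj : 0 < dd B c' j ∧ dd B c j < 0
    · simp only [if_pos hPj]
      exact hcol j
    · simp only [if_neg hPj, zero_zsmul, Finset.sum_const_zero]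
  rw [Finset.sum_congr rfl (fun i (_ : i ∈ Finset.univ) => hfirst i), Finset.sum_const_zero,
    zero_sub, neg_eq_zero, Finset.sum_comm,
    Finset.sum_congr rfl (fun j (_ : j ∈ Finset.univ) => hsecond j), Finset.sum_const_zero]

end A0Aux

/-- If the columns `β_i` of the `2 × N` integer matrix `B` are nonzero and sum to zero,
and `L` is the row span of `B`, then `a_0(c) ∈ ℤ^N/L` does not depend on the choice of
`c ∈ ℝ² ∖ ⋃ ℝ_{≥0}β_i`. -/
theorem a0_independent_of_c (N : ℕ) (B : Matrix (Fin 2) (Fin N) ℤ)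
    (hsum : ∀ r : Fin 2, ∑ j, B r j = 0)
    (hnz : ∀ j : Fin N, ¬(B 0 j = 0 ∧ B 1 j = 0))
    (L : AddSubgroup (Fin N → ℤ))
    (hL : L = AddSubgroup.closure {fun j => B 0 j, fun j => B 1 j})
    (c c' : Fin 2 → ℝ)
    (hc : ∀ j : Fin N, ¬ ∃ s : ℝ, 0 ≤ s ∧ ∀ r, c r = s * (B r j : ℝ))
    (hc' : ∀ j : Fin N, ¬ ∃ s : ℝ, 0 ≤ s ∧ ∀ r, c' r = s * (B r j : ℝ)) :
    a0sum N B L c = a0sum N B L c' := by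
  classical
  rcases Nat.eq_zero_or_pos N with hN | hN
  · subst hN
    have h0 : ∀ x : Fin 2 → ℝ, a0sum 0 B L x = 0 := by
      intro x
      unfold a0sum
      rw [Finset.univ_eq_empty, Finset.filter_empty, Finset.sum_empty]
    rw [h0, h0]
  · have keyNe : ∀ (x y : Fin 2 → ℝ),
        (∀ j : Fin N, ¬ ∃ s : ℝ, 0 ≤ s ∧ ∀ r, x r = s * (B r j : ℝ)) →
        (∀ j : Fin N, ¬ ∃ s : ℝ, 0 ≤ s ∧ ∀ r, y r = s * (B r j : ℝ)) →
        x 0 * y 1 - x 1 * y 0 ≠ 0 → a0sum N B L x = a0sum N B L y := by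
      intro x y hx hy hne
      rcases lt_or_gt_of_ne hne with hlt | hgt
      · exact A0Aux.key B hsum hnz L hL x y hx hy (by linarith)
      · exact (A0Aux.key B hsum hnz L hL y x hy hx hgt).symm
    by_cases hpar : c' 0 * c 1 - c' 1 * c 0 = 0
    · -- parallel case: go through an auxiliary direction c''
      have j0 : Fin N := ⟨0, hN⟩
      have hc0 : ¬ (c 0 = 0 ∧ c 1 = 0) := by
        rintro ⟨h0, h1⟩
        exact hc j0 ⟨0, le_refl 0, fun r => by fin_cases r <;> simp [h0, h1]⟩
      have hc'0 : ¬ (c' 0 = 0 ∧ c' 1 = 0) := by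
        rintro ⟨h0, h1⟩
        exact hc' j0 ⟨0, le_refl 0, fun r => by fin_cases r <;> simp [h0, h1]⟩
      have hcsq : 0 < c 0 ^ 2 + c 1 ^ 2 := by
        by_contra h
        push_neg at h
        exact hc0 ⟨by nlinarith, by nlinarith⟩
      have hq' : c' 0 * c 0 + c' 1 * c 1 ≠ 0 := by
        intro h
        apply hc'0
        constructor
        · have h2 : c' 0 * (c 0 ^ 2 + c 1 ^ 2)
              = c 0 * (c' 0 * c 0 + c' 1 * c 1) + c 1 * (c' 0 * c 1 - c' 1 * c 0) := by ring
          have h3 : c' 0 * (c 0 ^ 2 + c 1 ^ 2) = 0 := by rw [h2, h, hpar]; ring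
          exact (mul_eq_zero.mp h3).resolve_right (ne_of_gt hcsq)
        · have h2 : c' 1 * (c 0 ^ 2 + c 1 ^ 2)
              = c 1 * (c' 0 * c 0 + c' 1 * c 1) - c 0 * (c' 0 * c 1 - c' 1 * c 0) := by ring
          have h3 : c' 1 * (c 0 ^ 2 + c 1 ^ 2) = 0 := by rw [h2, h, hpar]; ring
          exact (mul_eq_zero.mp h3).resolve_right (ne_of_gt hcsq)
      obtain ⟨k, hk⟩ := Infinite.exists_notMem_finset
        (Finset.univ.image (fun j : Fin N =>
          -(c 0 * (B 0 j : ℝ) + c 1 * (B 1 j : ℝ)) / (c 0 * (B 1 j : ℝ) - c 1 * (B 0 j : ℝ))))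
      set c'' : Fin 2 → ℝ := ![c 1 + k * c 0, -(c 0) + k * c 1] with hc''def
      have hc''0 : c'' 0 = c 1 + k * c 0 := rfl
      have hc''1 : c'' 1 = -(c 0) + k * c 1 := rfl
      have hcc'' : ∀ j : Fin N, ¬ ∃ s : ℝ, 0 ≤ s ∧ ∀ r, c'' r = s * (B r j : ℝ) := by
        rintro j ⟨s, hs, hf⟩
        have h0 := hf 0
        have h1 := hf 1
        rw [hc''0] at h0
        rw [hc''1] at h1
        have hdet0 : (c 0 * (B 0 j : ℝ) + c 1 * (B 1 j : ℝ))
            + k * (c 0 * (B 1 j : ℝ) - c 1 * (B 0 j : ℝ)) = 0 := by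
          have hz : (c 1 + k * c 0) * (B 1 j : ℝ) - (-(c 0) + k * c 1) * (B 0 j : ℝ) = 0 := by
            rw [h0, h1]; ring
          linear_combination hz
        by_cases hdj : c 0 * (B 1 j : ℝ) - c 1 * (B 0 j : ℝ) = 0
        · have hqj : c 0 * (B 0 j : ℝ) + c 1 * (B 1 j : ℝ) = 0 := by
            rw [hdj] at hdet0; linarith
          apply A0Aux.hnzR hnz j
          constructor
          · have h2 : (B 0 j : ℝ) * (c 0 ^ 2 + c 1 ^ 2)
                = c 0 * (c 0 * (B 0 j : ℝ) + c 1 * (B 1 j : ℝ))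
                  - c 1 * (c 0 * (B 1 j : ℝ) - c 1 * (B 0 j : ℝ)) := by ring
            have h3 : (B 0 j : ℝ) * (c 0 ^ 2 + c 1 ^ 2) = 0 := by rw [h2, hqj, hdj]; ring
            exact (mul_eq_zero.mp h3).resolve_right (ne_of_gt hcsq)
          · have h2 : (B 1 j : ℝ) * (c 0 ^ 2 + c 1 ^ 2)
                = c 1 * (c 0 * (B 0 j : ℝ) + c 1 * (B 1 j : ℝ))
                  + c 0 * (c 0 * (B 1 j : ℝ) - c 1 * (B 0 j : ℝ)) := by ring
            have h3 : (B 1 j : ℝ) * (c 0 ^ 2 + c 1 ^ 2) = 0 := by rw [h2, hqj, hdj]; ring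
            exact (mul_eq_zero.mp h3).resolve_right (ne_of_gt hcsq)
        · apply hk
          have hkval : k = -(c 0 * (B 0 j : ℝ) + c 1 * (B 1 j : ℝ))
              / (c 0 * (B 1 j : ℝ) - c 1 * (B 0 j : ℝ)) := by
            rw [eq_div_iff hdj]
            linear_combination hdet0
          rw [hkval]
          exact Finset.mem_image_of_mem _ (Finset.mem_univ j)
      have hdet_c : c 0 * c'' 1 - c 1 * c'' 0 ≠ 0 := by
        rw [hc''0, hc''1]
        intro h
        nlinarith [hcsq]
      have hdet_c' : c'' 0 * c' 1 - c'' 1 * c' 0 ≠ 0 := by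
        rw [hc''0, hc''1]
        intro h
        apply hq'
        have h2 : (c' 0 * c 0 + c' 1 * c 1) - k * (c' 0 * c 1 - c' 1 * c 0) = 0 := by
          linear_combination h
        rw [hpar] at h2
        linarith
      exact (keyNe c c'' hc hcc'' hdet_c).trans (keyNe c'' c' hcc'' hc' hdet_c')
    · exact keyNe c c' hc hc' (fun h => hpar (by linarith))
end
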